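/- For every polyhedron P ⊆ ℝ³, the minimum cardinality of a small cover of P equals the minimum cardinality of a small partition of P. -/

import Mathlib

open Set

/-- An axis-aligned unit cube `[a, a+1] × [b, b+1] × [c, c+1]`. -/
def UnitCube (a b c : ℝ) : Set (ℝ × ℝ × ℝ) :=
  Icc a (a + 1) ×ˢ (Icc b (b + 1) ×ˢ Icc c (c + 1))

/-- A polyhedron: a compact set `P ⊆ ℝ³` with nonempty interior that equals the closure of
its interior and whose frontier is contained in a finite union of planes. -/
def IsPolyhedron (P : Set (ℝ × ℝ × ℝ)) : Prop :=
  IsCompact P ∧ (interior P).Nonempty ∧ P = closure (interior P) ∧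
    ∃ (n : ℕ) (a : Fin n → ℝ × ℝ × ℝ) (b : Fin n → ℝ),
      (∀ i, a i ≠ 0) ∧
      frontier P ⊆ ⋃ i, {x : ℝ × ℝ × ℝ |
        (a i).1 * x.1 + (a i).2.1 * x.2.1 + (a i).2.2 * x.2.2 = b i}

/-- A small 3D piece: a nonempty compact connected set contained in some axis-aligned
unit cube. -/
def IsSmallPiece3 (Q : Set (ℝ × ℝ × ℝ)) : Prop :=
  Q.Nonempty ∧ IsCompact Q ∧ IsConnected Q ∧ ∃ a b c : ℝ, Q ⊆ UnitCube a b c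

/-- A small cover of a polyhedron `P`: a finite family of small 3D pieces, each contained
in `P`, whose union is `P`. -/
def IsSmallCover3 (P : Set (ℝ × ℝ × ℝ)) (𝒬 : Set (Set (ℝ × ℝ × ℝ))) : Prop :=
  𝒬.Finite ∧ (∀ Q ∈ 𝒬, IsSmallPiece3 Q ∧ Q ⊆ P) ∧ ⋃₀ 𝒬 = P

/-- A small partition of `P`: a small cover whose pieces have pairwise disjoint
interiors. -/
def IsSmallPartition3 (P : Set (ℝ × ℝ × ℝ)) (𝒬 : Set (Set (ℝ × ℝ × ℝ))) : Prop :=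
  IsSmallCover3 P 𝒬 ∧ 𝒬.Pairwise fun Q R => interior Q ∩ interior R = ∅

/-!
Let `Q₁, …, Qₘ` be a small cover, `Qᵢ` lying in the unit cube `Cᵢ`, and let `N` be the union of
the planes bounding `P` and all the `Cᵢ`. Enlarge `Qᵢ` to the component `Zᵢ` of `P ∩ Cᵢ` that
contains it. The components of `ℝ³ \ N` are the open convex cells of the plane arrangement, so
each `Zᵢ` is a union of closed cells and of part of `N`, and the frontier of a bounded cell is a
topological sphere, hence connected. The pieces `Sᵢ = (Zᵢ \ ⋃_{j<i} int Zⱼ) ∪ (Zᵢ ∩ N)` cover `P`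
and overlap only inside the nowhere dense set `N`. They are connected: `Zᵢ ∩ N` is connected
because `Zᵢ` is (a separation of it would extend across the cells), and `Sᵢ` is `Zᵢ ∩ N` with
whole closed cells attached along their frontiers.
-/

section Topology

variable {X : Type*} [TopologicalSpace X]

theorem IsPreconnected.subset_of_disjoint_frontier {s t : Set X} (hs : IsPreconnected s)
    (hst : Disjoint s (frontier t)) (hne : (s ∩ t).Nonempty) : s ⊆ t := by
  have hcover : s ⊆ interior t ∪ (closure t)ᶜ := fun x hx => by
    by_cases hxt : x ∈ closure t
    · exact Or.inl (by_contra fun h => hst.notMem_of_mem_left hx ⟨hxt, h⟩)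
    · exact Or.inr hxt
  obtain ⟨x, hxs, hxt⟩ := hne
  have hx : x ∈ interior t := (hcover hxs).resolve_right (not_not.2 (subset_closure hxt))
  exact (hs.subset_left_of_subset_union isOpen_interior isClosed_closure.isOpen_compl
    (disjoint_compl_right_iff_subset.2 interior_subset_closure) hcover ⟨x, hxs, hx⟩).trans
    interior_subset

theorem IsClosed.connectedComponentIn {F : Set X} (hF : IsClosed F) (x : X) :
    IsClosed (connectedComponentIn F x) := by
  by_cases hx : x ∈ F
  · refine closure_subset_iff_isClosed.1 <|
      isPreconnected_connectedComponentIn.closure.subset_connectedComponentIn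
        (subset_closure (mem_connectedComponentIn hx)) ?_
    exact closure_minimal (connectedComponentIn_subset F x) hF
  · rw [connectedComponentIn_eq_empty hx]
    exact isClosed_empty

theorem biUnion_closure_subset_union_sUnion {𝒟 : Set (Set X)} {W : Set X}
    (h : ∀ D ∈ 𝒟, frontier D ⊆ W) : ⋃ D ∈ 𝒟, closure D ⊆ W ∪ ⋃₀ 𝒟 :=
  iUnion₂_subset fun D hD => closure_eq_self_union_frontier D ▸
    union_subset ((subset_sUnion_of_mem hD).trans subset_union_right)
      ((h D hD).trans subset_union_left)

/-- A separation of `K` extends to one of `K ∪ ⋃₀ 𝒞`: each `C` joins the side that contains its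
connected frontier. -/
theorem IsPreconnected.of_union_sUnion {K : Set X} {𝒞 : Set (Set X)} (hK : IsClosed K)
    (h𝒞 : 𝒞.Finite) (hdisj : 𝒞.PairwiseDisjoint id) (hCK : ∀ C ∈ 𝒞, Disjoint C K)
    (hfr : ∀ C ∈ 𝒞, frontier C ⊆ K) (hfrpre : ∀ C ∈ 𝒞, IsPreconnected (frontier C))
    (h : IsPreconnected (K ∪ ⋃₀ 𝒞)) : IsPreconnected K := by
  rw [isPreconnected_iff_subset_of_disjoint_closed]
  intro u v hu hv hKuv huv
  have hside : ∀ C ∈ 𝒞, frontier C ⊆ u ∨ frontier C ⊆ v := fun C hC =>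
    isPreconnected_iff_subset_of_disjoint_closed.1 (hfrpre C hC) u v hu hv
      ((hfr C hC).trans hKuv) (subset_eq_empty (inter_subset_inter_left _ (hfr C hC)) huv)
  set 𝒜 := {C ∈ 𝒞 | frontier C ⊆ u}
  have hℬ : ∀ C ∈ 𝒞 \ 𝒜, frontier C ⊆ v := fun C hC =>
    (hside C hC.1).resolve_left fun h => hC.2 ⟨hC.1, h⟩
  have hK_side : ∀ 𝒟 ⊆ 𝒞, ∀ w, K ⊆ K ∩ w ∪ ⋃₀ 𝒟 → K ⊆ w := by
    intro 𝒟 h𝒟 w hKw x hx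
    rcases hKw hx with hx' | ⟨D, hD, hxD⟩
    exacts [hx'.2, ((hCK D (h𝒟 hD)).notMem_of_mem_left hxD hx).elim]
  set A := K ∩ u ∪ ⋃ C ∈ 𝒜, closure C
  set B := K ∩ v ∪ ⋃ C ∈ 𝒞 \ 𝒜, closure C
  have hA : IsClosed A := (hK.inter hu).union
    ((h𝒞.subset (sep_subset _ _)).isClosed_biUnion fun _ _ => isClosed_closure)
  have hB : IsClosed B := (hK.inter hv).union
    ((h𝒞.subset sdiff_subset).isClosed_biUnion fun _ _ => isClosed_closure)
  have hAsub : A ⊆ K ∩ u ∪ ⋃₀ 𝒜 := union_subset subset_union_left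
    (biUnion_closure_subset_union_sUnion fun C hC => subset_inter (hfr C hC.1) hC.2)
  have hBsub : B ⊆ K ∩ v ∪ ⋃₀ (𝒞 \ 𝒜) := union_subset subset_union_left
    (biUnion_closure_subset_union_sUnion fun C hC => subset_inter (hfr C hC.1) (hℬ C hC))
  have hAB : Disjoint (K ∩ u ∪ ⋃₀ 𝒜) (K ∩ v ∪ ⋃₀ (𝒞 \ 𝒜)) := by
    simp only [disjoint_union_left, disjoint_union_right, disjoint_sUnion_left,
      disjoint_sUnion_right]
    refine ⟨⟨disjoint_left.2 fun x hxu hxv => huv.subset ⟨hxu.1, hxu.2, hxv.2⟩,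
      fun C hC => (hCK C hC.1).mono_right inter_subset_left⟩,
      fun D hD => ⟨(hCK D hD.1).symm.mono_left inter_subset_left,
        fun C hC => hdisj hC.1 hD.1 fun h => hD.2 (h ▸ hC)⟩⟩
  have hcover : K ∪ ⋃₀ 𝒞 ⊆ A ∪ B := by
    rintro x (hxK | ⟨C, hC, hxC⟩)
    · rcases hKuv hxK with hxu | hxv
      exacts [Or.inl (Or.inl ⟨hxK, hxu⟩), Or.inr (Or.inl ⟨hxK, hxv⟩)]
    · by_cases hC𝒜 : C ∈ 𝒜
      · exact Or.inl (Or.inr (mem_biUnion hC𝒜 (subset_closure hxC)))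
      · exact Or.inr (Or.inr (mem_biUnion ⟨hC, hC𝒜⟩ (subset_closure hxC)))
  rcases isPreconnected_iff_subset_of_disjoint_closed.1 h _ _ hA hB hcover
    (by rw [(hAB.mono hAsub hBsub).inter_eq, inter_empty]) with hsub | hsub
  · exact Or.inl (hK_side 𝒜 (sep_subset _ _) u (subset_union_left.trans (hsub.trans hAsub)))
  · exact Or.inr (hK_side _ sdiff_subset v (subset_union_left.trans (hsub.trans hBsub)))

theorem IsPreconnected.union_sUnion {K : Set X} {𝒯 : Set (Set X)} (hK : IsPreconnected K)
    (h𝒯 : ∀ T ∈ 𝒯, IsPreconnected T) (hmeet : ∀ T ∈ 𝒯, (K ∩ T).Nonempty) :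
    IsPreconnected (K ∪ ⋃₀ 𝒯) := by
  rcases K.eq_empty_or_nonempty with rfl | ⟨x, hx⟩
  · have : 𝒯 = ∅ := eq_empty_of_forall_notMem fun T hT => by simpa using hmeet T hT
    simpa [this] using isPreconnected_empty
  have hU : K ∪ ⋃₀ 𝒯 = ⋃₀ insert K ((K ∪ ·) '' 𝒯) := by
    ext y
    simp only [mem_union, mem_sUnion, sUnion_insert, sUnion_image, mem_iUnion, exists_prop]
    constructor
    · rintro (hy | ⟨T, hT, hy⟩)
      exacts [Or.inl hy, Or.inr ⟨T, hT, Or.inr hy⟩]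
    · rintro (hy | ⟨T, hT, hy | hy⟩)
      exacts [Or.inl hy, Or.inl hy, Or.inr ⟨T, hT, hy⟩]
  rw [hU]
  refine isPreconnected_sUnion x _ ?_ ?_
  · rintro _ (rfl | ⟨T, -, rfl⟩)
    exacts [hx, Or.inl hx]
  · rintro _ (rfl | ⟨T, hT, rfl⟩)
    exacts [hK, hK.union' (hmeet T hT) (h𝒯 T hT)]

end Topology

section Components

variable {X : Type*} [TopologicalSpace X] {N Z : Set X}

theorem mem_interior_of_frontier_subset (hZN : frontier Z ⊆ N) {x : X} (hx : x ∈ Z)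
    (hxN : x ∉ N) : x ∈ interior Z :=
  (mem_interior_iff_notMem_frontier hx).2 fun h => hxN (hZN h)

theorem connectedComponentIn_compl_subset (hZN : frontier Z ⊆ N) {x : X} (hx : x ∈ Z) :
    connectedComponentIn Nᶜ x ⊆ Z := by
  by_cases hxN : x ∈ N
  · rw [connectedComponentIn_eq_empty (not_not.2 hxN)]
    exact empty_subset _
  · exact isPreconnected_connectedComponentIn.subset_of_disjoint_frontier
      (disjoint_compl_left.mono (connectedComponentIn_subset _ _) hZN)
      ⟨x, mem_connectedComponentIn hxN, hx⟩

variable [LocallyConnectedSpace X]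

theorem frontier_connectedComponentIn_subset {U : Set X} (hU : IsOpen U) (x : X) :
    frontier (connectedComponentIn U x) ⊆ Uᶜ := by
  intro y hy hyU
  obtain ⟨z, hzy, hzx⟩ := mem_closure_iff.1 hy.1 _ hU.connectedComponentIn
    (mem_connectedComponentIn hyU)
  have hyx : y ∈ connectedComponentIn U x := by
    rw [connectedComponentIn_eq hzx, ← connectedComponentIn_eq hzy]
    exact mem_connectedComponentIn hyU
  exact hy.2 (hU.connectedComponentIn.interior_eq.symm ▸ hyx)

theorem frontier_connectedComponentIn_compl_subset (hN : IsClosed N) (hZ : IsClosed Z)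
    (hZN : frontier Z ⊆ N) {x : X} (hx : x ∈ Z) :
    frontier (connectedComponentIn Nᶜ x) ⊆ Z ∩ N := fun _ hy =>
  ⟨closure_minimal (connectedComponentIn_compl_subset hZN hx) hZ (frontier_subset_closure hy),
    compl_compl N ▸ frontier_connectedComponentIn_subset hN.isOpen_compl x hy⟩

theorem frontier_connectedComponentIn_subset_of_frontier_subset (hN : IsClosed N) {F : Set X}
    (hF : IsClosed F) (hFN : frontier F ⊆ N) (p : X) :
    frontier (connectedComponentIn F p) ⊆ N := by
  intro y hy
  by_contra hyN
  have hyZ : y ∈ connectedComponentIn F p :=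
    (hF.connectedComponentIn p).frontier_subset hy
  have hsub : connectedComponentIn Nᶜ y ⊆ connectedComponentIn F p := by
    rw [connectedComponentIn_eq hyZ]
    exact isPreconnected_connectedComponentIn.subset_connectedComponentIn
      (mem_connectedComponentIn hyN)
      (connectedComponentIn_compl_subset hFN (connectedComponentIn_subset F p hyZ))
  exact hy.2 (interior_maximal hsub hN.isOpen_compl.connectedComponentIn
    (mem_connectedComponentIn hyN))

theorem isPreconnected_inter_of_frontier_subset (hN : IsClosed N)
    (hfin : (range (connectedComponentIn Nᶜ)).Finite) (hZ : IsClosed Z) (hZpre : IsPreconnected Z)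
    (hZN : frontier Z ⊆ N)
    (hfr : ∀ x ∈ Z, IsPreconnected (frontier (connectedComponentIn Nᶜ x))) :
    IsPreconnected (Z ∩ N) := by
  have hunion : Z ∩ N ∪ ⋃₀ (connectedComponentIn Nᶜ '' Z) = Z := by
    refine subset_antisymm (union_subset inter_subset_left ?_) fun x hx => ?_
    · rintro _ ⟨_, ⟨x, hx, rfl⟩, hy⟩
      exact connectedComponentIn_compl_subset hZN hx hy
    · by_cases hxN : x ∈ N
      · exact Or.inl ⟨hx, hxN⟩
      · exact Or.inr ⟨_, mem_image_of_mem _ hx, mem_connectedComponentIn hxN⟩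
  refine IsPreconnected.of_union_sUnion (hZ.inter hN) (hfin.subset (image_subset_range _ _))
    ?_ ?_ ?_ ?_ (hunion.symm ▸ hZpre)
  · rintro _ ⟨x, -, rfl⟩ _ ⟨y, -, rfl⟩ hne
    refine not_not.1 fun h => hne ?_
    obtain ⟨z, hzx, hzy⟩ := not_disjoint_iff.1 h
    rw [connectedComponentIn_eq hzx, connectedComponentIn_eq hzy]
  · rintro _ ⟨x, -, rfl⟩
    exact (disjoint_compl_left.mono_left (connectedComponentIn_subset _ _)).mono_right
      inter_subset_right
  · rintro _ ⟨x, hx, rfl⟩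
    exact frontier_connectedComponentIn_compl_subset hN hZ hZN hx
  · rintro _ ⟨x, hx, rfl⟩
    exact hfr x hx

end Components

section InteriorDisjointed

variable {X : Type*} [TopologicalSpace X] {ι : Type*} [LinearOrder ι]

/-- Unlike `disjointed`, only interiors are removed and all of `Z i ∩ N` is kept: this is what
keeps the pieces closed and connected. -/
def interiorDisjointed (N : Set X) (Z : ι → Set X) (i : ι) : Set X :=
  (Z i \ ⋃ j < i, interior (Z j)) ∪ (Z i ∩ N)

variable {N : Set X} {Z : ι → Set X}

theorem interiorDisjointed_subset (i : ι) : interiorDisjointed N Z i ⊆ Z i :=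
  union_subset sdiff_subset inter_subset_left

theorem isClosed_interiorDisjointed {i : ι} (hZ : IsClosed (Z i)) (hN : IsClosed N) :
    IsClosed (interiorDisjointed N Z i) :=
  (hZ.sdiff (isOpen_biUnion fun _ _ => isOpen_interior)).union (hZ.inter hN)

theorem iUnion_interiorDisjointed [WellFoundedLT ι] :
    ⋃ i, interiorDisjointed N Z i = ⋃ i, Z i := by
  refine subset_antisymm (iUnion_mono interiorDisjointed_subset) fun x hx => ?_
  obtain ⟨i, hi, hmin⟩ := wellFounded_lt.has_min {i | x ∈ Z i} (mem_iUnion.1 hx)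
  refine mem_iUnion.2 ⟨i, Or.inl ⟨hi, fun hx' => ?_⟩⟩
  obtain ⟨j, hji, hxj⟩ := mem_iUnion₂.1 hx'
  exact hmin j (show x ∈ Z j from interior_subset hxj) hji

theorem disjoint_interior_interiorDisjointed (hNi : interior N = ∅)
    (hZN : ∀ i, frontier (Z i) ⊆ N) {i j : ι} (hij : i ≠ j) :
    Disjoint (interior (interiorDisjointed N Z i)) (interior (interiorDisjointed N Z j)) := by
  wlog hji : j < i generalizing i j
  · exact (this hij.symm (lt_of_le_of_ne (not_lt.1 hji) hij)).symm
  rw [disjoint_iff_inter_eq_empty, ← subset_empty_iff, ← hNi]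
  refine interior_maximal (fun x hx => by_contra fun hxN => ?_)
    (isOpen_interior.inter isOpen_interior)
  have hxi : x ∈ Z i \ ⋃ k < i, interior (Z k) :=
    (interior_subset hx.1).resolve_right fun h => hxN h.2
  have hxj : x ∈ Z j := interiorDisjointed_subset j (interior_subset hx.2)
  exact hxi.2 (mem_iUnion₂.2 ⟨j, hji, mem_interior_of_frontier_subset (hZN j) hxj hxN⟩)

theorem connectedComponentIn_compl_subset_interiorDisjointed (hZN : ∀ i, frontier (Z i) ⊆ N)
    {i : ι} {x : X} (hx : x ∈ interiorDisjointed N Z i) (hxN : x ∉ N) :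
    connectedComponentIn Nᶜ x ⊆ Z i \ ⋃ j < i, interior (Z j) := by
  have hx' : x ∈ Z i \ ⋃ j < i, interior (Z j) := hx.resolve_right fun h => hxN h.2
  refine fun y hy => ⟨connectedComponentIn_compl_subset (hZN i) hx'.1 hy, fun hy' => ?_⟩
  obtain ⟨j, hji, hyj⟩ := mem_iUnion₂.1 hy'
  have hxj : x ∈ Z j := connectedComponentIn_compl_subset (hZN j) (interior_subset hyj)
    (connectedComponentIn_eq hy ▸ mem_connectedComponentIn hxN)
  exact hx'.2 (mem_iUnion₂.2 ⟨j, hji, mem_interior_of_frontier_subset (hZN j) hxj hxN⟩)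

variable [PreconnectedSpace X]

theorem nonempty_interiorDisjointed {i : ι} (hZ : IsClosed (Z i)) (hZne : (Z i).Nonempty)
    (hZuniv : Z i ≠ univ) (hZN : frontier (Z i) ⊆ N) : (interiorDisjointed N Z i).Nonempty :=
  (nonempty_frontier_iff.2 ⟨hZne, hZuniv⟩).mono fun _ hx =>
    Or.inr ⟨hZ.frontier_subset hx, hZN hx⟩

variable [LocallyConnectedSpace X]

theorem isPreconnected_interiorDisjointed (hN : IsClosed N)
    (hfin : (range (connectedComponentIn Nᶜ)).Finite) (hZN : ∀ i, frontier (Z i) ⊆ N) {i : ι}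
    (hZ : IsClosed (Z i)) (hZpre : IsPreconnected (Z i)) (hZuniv : Z i ≠ univ)
    (hfr : ∀ x ∈ Z i, IsPreconnected (frontier (connectedComponentIn Nᶜ x))) :
    IsPreconnected (interiorDisjointed N Z i) := by
  set 𝒯 := closure '' (connectedComponentIn Nᶜ '' (interiorDisjointed N Z i \ N))
  have hfrsub : ∀ x ∈ interiorDisjointed N Z i,
      frontier (connectedComponentIn Nᶜ x) ⊆ Z i ∩ N := fun x hx =>
    frontier_connectedComponentIn_compl_subset hN hZ (hZN i) (interiorDisjointed_subset i hx)
  have hS : interiorDisjointed N Z i = Z i ∩ N ∪ ⋃₀ 𝒯 := by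
    refine subset_antisymm (fun x hx => ?_) (union_subset subset_union_right ?_)
    · by_cases hxN : x ∈ N
      · exact Or.inl ⟨interiorDisjointed_subset i hx, hxN⟩
      · exact Or.inr ⟨_, mem_image_of_mem _ (mem_image_of_mem _ ⟨hx, hxN⟩),
          subset_closure (mem_connectedComponentIn hxN)⟩
    · rintro y ⟨_, ⟨_, ⟨x, ⟨hx, hxN⟩, rfl⟩, rfl⟩, hy⟩
      rw [closure_eq_self_union_frontier] at hy
      exact hy.imp (fun hy => connectedComponentIn_compl_subset_interiorDisjointed hZN hx hxN hy)
        (fun hy => hfrsub x hx hy)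
  rw [hS]
  refine (isPreconnected_inter_of_frontier_subset hN hfin hZ hZpre (hZN i) hfr).union_sUnion
    ?_ ?_
  · rintro _ ⟨_, ⟨x, -, rfl⟩, rfl⟩
    exact isPreconnected_connectedComponentIn.closure
  · rintro _ ⟨_, ⟨x, ⟨hx, hxN⟩, rfl⟩, rfl⟩
    have hne : (frontier (connectedComponentIn Nᶜ x)).Nonempty :=
      nonempty_frontier_iff.2 ⟨⟨x, mem_connectedComponentIn hxN⟩, fun h => hZuniv <|
        eq_univ_of_univ_subset <| h ▸ connectedComponentIn_compl_subset (hZN i)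
          (interiorDisjointed_subset i hx)⟩
    obtain ⟨y, hy⟩ := hne
    exact ⟨y, hfrsub x hx hy, frontier_subset_closure hy⟩

end InteriorDisjointed

section Refinement

variable {X : Type*} [TopologicalSpace X] [LocallyConnectedSpace X] [PreconnectedSpace X]
  {ι : Type*} [LinearOrder ι] [WellFoundedLT ι]

theorem exists_interior_disjoint_refinement {N : Set X} (hN : IsClosed N)
    (hNi : interior N = ∅) (hfin : (range (connectedComponentIn Nᶜ)).Finite)
    {F Q : ι → Set X} (hF : ∀ i, IsClosed (F i)) (hFN : ∀ i, frontier (F i) ⊆ N)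
    (hFuniv : ∀ i, F i ≠ univ)
    (hfr : ∀ i, ∀ x ∈ F i, IsPreconnected (frontier (connectedComponentIn Nᶜ x)))
    (hQ : ∀ i, IsConnected (Q i)) (hQF : ∀ i, Q i ⊆ F i) :
    ∃ S : ι → Set X, (∀ i, IsClosed (S i) ∧ IsConnected (S i) ∧ S i ⊆ F i) ∧
      ⋃ i, Q i ⊆ ⋃ i, S i ∧ Pairwise fun i j => Disjoint (interior (S i)) (interior (S j)) := by
  choose q hq using fun i => (hQ i).nonempty
  set Z := fun i => connectedComponentIn (F i) (q i)
  have hZF : ∀ i, Z i ⊆ F i := fun i => connectedComponentIn_subset _ _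
  have hZ : ∀ i, IsClosed (Z i) := fun i => (hF i).connectedComponentIn _
  have hZN : ∀ i, frontier (Z i) ⊆ N := fun i =>
    frontier_connectedComponentIn_subset_of_frontier_subset hN (hF i) (hFN i) _
  have hQZ : ∀ i, Q i ⊆ Z i := fun i =>
    (hQ i).isPreconnected.subset_connectedComponentIn (hq i) (hQF i)
  have hZuniv : ∀ i, Z i ≠ univ := fun i h => hFuniv i (eq_univ_of_univ_subset (h ▸ hZF i))
  refine ⟨interiorDisjointed N Z, fun i => ⟨isClosed_interiorDisjointed (hZ i) hN,
    ⟨nonempty_interiorDisjointed (hZ i) ⟨q i, hQZ i (hq i)⟩ (hZuniv i) (hZN i),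
      isPreconnected_interiorDisjointed hN hfin hZN (hZ i) isPreconnected_connectedComponentIn
        (hZuniv i) fun x hx => hfr i x (hZF i hx)⟩,
    (interiorDisjointed_subset i).trans (hZF i)⟩, ?_,
    fun i j hij => disjoint_interior_interiorDisjointed hNi hZN hij⟩
  rw [iUnion_interiorDisjointed]
  exact iUnion_mono hQZ

end Refinement

section Arrangement

variable {E : Type*} [NormedAddCommGroup E] [NormedSpace ℝ E]

theorem Convex.isPreconnected_frontier (hE : 1 < Module.rank ℝ E) {s : Set E} (hs : Convex ℝ s)
    (hb : Bornology.IsBounded s) (hne : (interior s).Nonempty) :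
    IsPreconnected (frontier s) := by
  obtain ⟨h, -, -, hfr⟩ := exists_homeomorph_image_interior_closure_frontier_eq_unitBall hs hne hb
  have : frontier s = h.symm '' Metric.sphere 0 1 := by
    rw [← hfr]
    exact (h.symm_image_image _).symm
  rw [this]
  exact (isConnected_sphere hE 0 zero_le_one).isPreconnected.image _ h.symm.continuous.continuousOn

theorem interior_hyperplane_eq_empty {f : E →L[ℝ] ℝ} (hf : f ≠ 0) (c : ℝ) :
    interior {x | f x = c} = ∅ := by
  rw [show {x | f x = c} = f ⁻¹' {c} from rfl,
    ← (f.isOpenMap_of_ne_zero hf).preimage_interior_eq_interior_preimage f.continuous,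
    interior_singleton, preimage_empty]

def hyperplaneUnion (H : Set ((E →L[ℝ] ℝ) × ℝ)) : Set E := ⋃ h ∈ H, {x | h.1 x = h.2}

def openHalfSpace (h : (E →L[ℝ] ℝ) × ℝ) : Bool → Set E
  | true => {x | h.1 x < h.2}
  | false => {x | h.2 < h.1 x}

def arrangementCell (H : Set ((E →L[ℝ] ℝ) × ℝ)) (σ : H → Bool) : Set E :=
  ⋂ h : H, openHalfSpace h (σ h)

theorem isOpen_openHalfSpace (h : (E →L[ℝ] ℝ) × ℝ) (b : Bool) : IsOpen (openHalfSpace h b) := by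
  cases b
  exacts [isOpen_lt continuous_const h.1.continuous, isOpen_lt h.1.continuous continuous_const]

theorem convex_openHalfSpace (h : (E →L[ℝ] ℝ) × ℝ) (b : Bool) :
    Convex ℝ (openHalfSpace h b) := by
  cases b
  exacts [convex_halfSpace_gt h.1.isLinear h.2, convex_halfSpace_lt h.1.isLinear h.2]

theorem frontier_openHalfSpace_subset (h : (E →L[ℝ] ℝ) × ℝ) (b : Bool) :
    frontier (openHalfSpace h b) ⊆ {x | h.1 x = h.2} := by
  cases b
  · exact fun x hx => (frontier_lt_subset_eq continuous_const h.1.continuous hx).symm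
  · exact frontier_lt_subset_eq h.1.continuous continuous_const

variable {H : Set ((E →L[ℝ] ℝ) × ℝ)}

theorem isClosed_hyperplaneUnion [Finite H] : IsClosed (hyperplaneUnion H) :=
  H.toFinite.isClosed_biUnion fun h _ => isClosed_eq h.1.continuous continuous_const

theorem interior_hyperplaneUnion [Finite H] (hH : ∀ h ∈ H, h.1 ≠ 0) :
    interior (hyperplaneUnion H) = ∅ := by
  rw [interior_eq_empty_iff_dense_compl, hyperplaneUnion, compl_iUnion₂, ← sInter_image]
  refine (H.toFinite.image _).dense_sInter ?_ ?_ <;> rintro _ ⟨h, hh, rfl⟩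
  · exact (isClosed_eq h.1.continuous continuous_const).isOpen_compl
  · exact interior_eq_empty_iff_dense_compl.1 (interior_hyperplane_eq_empty (hH h hh) h.2)

theorem isOpen_arrangementCell [Finite H] (σ : H → Bool) : IsOpen (arrangementCell H σ) :=
  isOpen_iInter_of_finite fun _ => isOpen_openHalfSpace _ _

theorem convex_arrangementCell (σ : H → Bool) : Convex ℝ (arrangementCell H σ) :=
  convex_iInter fun _ => convex_openHalfSpace _ _

theorem arrangementCell_subset_compl (σ : H → Bool) :
    arrangementCell H σ ⊆ (hyperplaneUnion H)ᶜ := by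
  intro x hx hxH
  obtain ⟨h, hh, hxh : h.1 x = h.2⟩ := mem_iUnion₂.1 hxH
  have hxσ := mem_iInter.1 hx ⟨h, hh⟩
  generalize σ ⟨h, hh⟩ = b at hxσ
  cases b <;> simp [openHalfSpace, hxh] at hxσ

theorem frontier_arrangementCell_subset [Finite H] (σ : H → Bool) :
    frontier (arrangementCell H σ) ⊆ hyperplaneUnion H := by
  intro x hx
  have hxσ : x ∉ arrangementCell H σ := by
    rw [← (isOpen_arrangementCell σ).interior_eq]
    exact hx.2
  obtain ⟨h, hxh⟩ := not_forall.1 fun h' => hxσ (mem_iInter.2 h')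
  have hcl : x ∈ closure (openHalfSpace (E := E) h (σ h)) := closure_mono (iInter_subset _ h) hx.1
  have hfr : x ∈ frontier (openHalfSpace (E := E) h (σ h)) :=
    ⟨hcl, by rwa [(isOpen_openHalfSpace _ _).interior_eq]⟩
  exact mem_iUnion₂.2 ⟨h, h.2, frontier_openHalfSpace_subset _ _ hfr⟩

theorem mem_arrangementCell_sign {x : E} (hx : x ∉ hyperplaneUnion H) :
    x ∈ arrangementCell H fun h => decide (h.1.1 x < h.1.2) := by
  refine mem_iInter.2 fun h => ?_
  have hne : h.1.1 x ≠ h.1.2 := fun heq => hx (mem_iUnion₂.2 ⟨h, h.2, heq⟩)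
  by_cases hlt : h.1.1 x < h.1.2
  · simp [hlt, openHalfSpace]
  · simpa [hlt, openHalfSpace] using lt_of_le_of_ne (not_lt.1 hlt) hne.symm

theorem connectedComponentIn_compl_hyperplaneUnion [Finite H] {x : E}
    (hx : x ∉ hyperplaneUnion H) :
    connectedComponentIn (hyperplaneUnion H)ᶜ x =
      arrangementCell H fun h => decide (h.1.1 x < h.1.2) := by
  have hxc := mem_arrangementCell_sign hx
  refine subset_antisymm ?_ ((convex_arrangementCell _).isPreconnected.subset_connectedComponentIn
    hxc (arrangementCell_subset_compl _))
  exact isPreconnected_connectedComponentIn.subset_of_disjoint_frontier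
    (disjoint_compl_left.mono (connectedComponentIn_subset _ _)
      (frontier_arrangementCell_subset _))
    ⟨x, mem_connectedComponentIn hx, hxc⟩

theorem finite_range_connectedComponentIn_compl_hyperplaneUnion [Finite H] :
    (range (connectedComponentIn (hyperplaneUnion H)ᶜ)).Finite := by
  refine ((finite_range (arrangementCell H)).insert ∅).subset ?_
  rintro _ ⟨x, rfl⟩
  by_cases hx : x ∈ hyperplaneUnion H
  · exact Or.inl (connectedComponentIn_eq_empty (not_not.2 hx))
  · exact Or.inr ⟨_, (connectedComponentIn_compl_hyperplaneUnion hx).symm⟩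

theorem isPreconnected_frontier_connectedComponentIn_compl_hyperplaneUnion [Finite H]
    (hE : 1 < Module.rank ℝ E) {x : E}
    (hb : Bornology.IsBounded (connectedComponentIn (hyperplaneUnion H)ᶜ x)) :
    IsPreconnected (frontier (connectedComponentIn (hyperplaneUnion H)ᶜ x)) := by
  by_cases hx : x ∈ hyperplaneUnion H
  · rw [connectedComponentIn_eq_empty (not_not.2 hx), frontier_empty]
    exact isPreconnected_empty
  · rw [connectedComponentIn_compl_hyperplaneUnion hx] at hb ⊢
    refine (convex_arrangementCell _).isPreconnected_frontier hE hb ?_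
    rw [(isOpen_arrangementCell _).interior_eq]
    exact ⟨x, mem_arrangementCell_sign hx⟩

end Arrangement

section UnitCube

def dotCLM (a : ℝ × ℝ × ℝ) : ℝ × ℝ × ℝ →L[ℝ] ℝ :=
  a.1 • ContinuousLinearMap.fst ℝ ℝ (ℝ × ℝ) +
    a.2.1 • (ContinuousLinearMap.fst ℝ ℝ ℝ).comp (ContinuousLinearMap.snd ℝ ℝ (ℝ × ℝ)) +
    a.2.2 • (ContinuousLinearMap.snd ℝ ℝ ℝ).comp (ContinuousLinearMap.snd ℝ ℝ (ℝ × ℝ))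

@[simp]
theorem dotCLM_apply (a x : ℝ × ℝ × ℝ) :
    dotCLM a x = a.1 * x.1 + a.2.1 * x.2.1 + a.2.2 * x.2.2 := by
  simp [dotCLM]

theorem dotCLM_ne_zero {a : ℝ × ℝ × ℝ} (ha : a ≠ 0) : dotCLM a ≠ 0 := by
  contrapose! ha
  have h₁ := DFunLike.congr_fun ha (1, 0, 0)
  have h₂ := DFunLike.congr_fun ha (0, 1, 0)
  have h₃ := DFunLike.congr_fun ha (0, 0, 1)
  simp only [dotCLM_apply, zero_apply] at h₁ h₂ h₃
  ext <;> simp_all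

def unitCubeFaces (a b c : ℝ) : Set ((ℝ × ℝ × ℝ →L[ℝ] ℝ) × ℝ) :=
  {(dotCLM (1, 0, 0), a), (dotCLM (1, 0, 0), a + 1), (dotCLM (0, 1, 0), b),
    (dotCLM (0, 1, 0), b + 1), (dotCLM (0, 0, 1), c), (dotCLM (0, 0, 1), c + 1)}

theorem finite_unitCubeFaces (a b c : ℝ) : (unitCubeFaces a b c).Finite := by
  simp [unitCubeFaces]

theorem isCompact_unitCube (a b c : ℝ) : IsCompact (UnitCube a b c) :=
  isCompact_Icc.prod (isCompact_Icc.prod isCompact_Icc)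

theorem frontier_unitCube_subset (a b c : ℝ) :
    frontier (UnitCube a b c) ⊆ hyperplaneUnion (unitCubeFaces a b c) := by
  intro x hx
  have hxC : x ∈ UnitCube a b c := (isCompact_unitCube a b c).isClosed.frontier_subset hx
  have hxI : x ∉ interior (UnitCube a b c) := hx.2
  simp only [UnitCube, interior_prod_eq, interior_Icc, mem_prod, mem_Icc, mem_Ioo] at hxC hxI
  simp only [hyperplaneUnion, unitCubeFaces, biUnion_insert, biUnion_singleton, mem_union,
    mem_ofPred_eq, dotCLM_apply]
  contrapose! hxI
  obtain ⟨⟨h₁, h₁'⟩, ⟨h₂, h₂'⟩, ⟨h₃, h₃'⟩⟩ := hxC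
  norm_num at hxI
  refine ⟨⟨?_, ?_⟩, ⟨?_, ?_⟩, ⟨?_, ?_⟩⟩ <;> grind

end UnitCube

section SmallPartition

theorem IsPolyhedron.exists_frontier_inter_unitCube_subset {P : Set (ℝ × ℝ × ℝ)}
    (hP : IsPolyhedron P) {ι : Type*} [Finite ι] (a b c : ι → ℝ) :
    ∃ H : Set ((ℝ × ℝ × ℝ →L[ℝ] ℝ) × ℝ), H.Finite ∧ (∀ h ∈ H, h.1 ≠ 0) ∧
      ∀ i, frontier (P ∩ UnitCube (a i) (b i) (c i)) ⊆ hyperplaneUnion H := by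
  obtain ⟨-, -, -, n, a', b', ha', hfr⟩ := hP
  refine ⟨range (fun k => (dotCLM (a' k), b' k)) ∪ ⋃ i, unitCubeFaces (a i) (b i) (c i),
    (finite_range _).union (finite_iUnion fun _ => finite_unitCubeFaces _ _ _), ?_, fun i => ?_⟩
  · rintro h (⟨k, rfl⟩ | hh)
    · exact dotCLM_ne_zero (ha' k)
    · obtain ⟨i, hh⟩ := mem_iUnion.1 hh
      simp only [unitCubeFaces, mem_insert_iff, mem_singleton_iff] at hh
      rcases hh with rfl | rfl | rfl | rfl | rfl | rfl <;> exact dotCLM_ne_zero (by simp)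
  refine (frontier_inter_subset _ _).trans (union_subset (inter_subset_left.trans fun x hx => ?_)
    (inter_subset_right.trans ((frontier_unitCube_subset _ _ _).trans
      (biUnion_subset_biUnion_left (subset_union_right.trans'
        (subset_iUnion (fun i => unitCubeFaces _ _ _) i))))))
  obtain ⟨k, hk⟩ := mem_iUnion.1 (hfr hx)
  exact mem_iUnion₂.2 ⟨_, Or.inl ⟨k, rfl⟩, by simpa using hk⟩

theorem IsPolyhedron.exists_smallPartition {P : Set (ℝ × ℝ × ℝ)} (hP : IsPolyhedron P)
    {ι : Type*} [Finite ι] [LinearOrder ι] {Q : ι → Set (ℝ × ℝ × ℝ)}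
    (hQ : ∀ i, IsSmallPiece3 (Q i) ∧ Q i ⊆ P) (hQP : ⋃ i, Q i = P) :
    ∃ S : ι → Set (ℝ × ℝ × ℝ), IsSmallPartition3 P (range S) := by
  choose a b c hQcube using fun i => (hQ i).1.2.2.2
  obtain ⟨H, hH, hH0, hFN⟩ := hP.exists_frontier_inter_unitCube_subset a b c
  have := hH.to_subtype
  have hFcpt : ∀ i, IsCompact (P ∩ UnitCube (a i) (b i) (c i)) := fun i =>
    hP.1.inter_right (isCompact_unitCube _ _ _).isClosed
  have hrank : 1 < Module.rank ℝ (ℝ × ℝ × ℝ) := by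
    rw [rank_prod', rank_prod', Module.rank_self]
    norm_num
  obtain ⟨S, hS, hQS, hdisj⟩ := exists_interior_disjoint_refinement isClosed_hyperplaneUnion
    (interior_hyperplaneUnion hH0) finite_range_connectedComponentIn_compl_hyperplaneUnion
    (fun i => (hFcpt i).isClosed) hFN (fun i => (hFcpt i).ne_univ)
    (fun i x hx => isPreconnected_frontier_connectedComponentIn_compl_hyperplaneUnion hrank
      ((isCompact_unitCube _ _ _).isBounded.subset
        ((connectedComponentIn_compl_subset (hFN i) hx).trans inter_subset_right)))
    (fun i => (hQ i).1.2.2.1) (fun i => subset_inter (hQ i).2 (hQcube i))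
  refine ⟨S, ⟨finite_range S, ?_, ?_⟩, ?_⟩
  · rintro _ ⟨i, rfl⟩
    obtain ⟨hSc, hSconn, hSF⟩ := hS i
    exact ⟨⟨hSconn.nonempty, (isCompact_unitCube _ _ _).of_isClosed_subset hSc
      (hSF.trans inter_subset_right), hSconn, a i, b i, c i, hSF.trans inter_subset_right⟩,
      hSF.trans inter_subset_left⟩
  · rw [sUnion_range]
    exact subset_antisymm (iUnion_subset fun i => (hS i).2.2.trans inter_subset_left)
      (hQP ▸ hQS)
  · rintro _ ⟨i, rfl⟩ _ ⟨j, rfl⟩ hij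
    exact (hdisj fun h => hij (congrArg S h)).inter_eq

theorem IsSmallCover3.exists_smallPartition_ncard_le {P : Set (ℝ × ℝ × ℝ)}
    {𝒬 : Set (Set (ℝ × ℝ × ℝ))} (h𝒬 : IsSmallCover3 P 𝒬) (hP : IsPolyhedron P) :
    ∃ 𝒮, IsSmallPartition3 P 𝒮 ∧ 𝒮.ncard ≤ 𝒬.ncard := by
  obtain ⟨hfin, hQ, hQP⟩ := h𝒬
  have := hfin.to_subtype
  let : LinearOrder 𝒬 := LinearOrder.lift' _ (Finite.equivFin 𝒬).injective
  obtain ⟨S, hS⟩ := hP.exists_smallPartition (Q := Subtype.val) (fun Q => hQ Q Q.2)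
    (sUnion_eq_iUnion ▸ hQP)
  refine ⟨range S, hS, ?_⟩
  rw [← Nat.card_coe_set_eq, ← Nat.card_coe_set_eq]
  exact Finite.card_range_le S

end SmallPartition

/-- For every polyhedron `P ⊆ ℝ³`, the minimum cardinality of a small cover of `P` equals
the minimum cardinality of a small partition of `P`. -/
theorem min_small_cover_eq_min_small_partition_3d
    (P : Set (ℝ × ℝ × ℝ)) (hP : IsPolyhedron P) :
    sInf {k : ℕ | ∃ 𝒬 : Set (Set (ℝ × ℝ × ℝ)), IsSmallCover3 P 𝒬 ∧ 𝒬.ncard = k} =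
    sInf {k : ℕ | ∃ 𝒬 : Set (Set (ℝ × ℝ × ℝ)), IsSmallPartition3 P 𝒬 ∧ 𝒬.ncard = k} := by
  set covers := {k : ℕ | ∃ 𝒬 : Set (Set (ℝ × ℝ × ℝ)), IsSmallCover3 P 𝒬 ∧ 𝒬.ncard = k}
  set partitions := {k : ℕ | ∃ 𝒬 : Set (Set (ℝ × ℝ × ℝ)), IsSmallPartition3 P 𝒬 ∧ 𝒬.ncard = k}
  have hsub : partitions ⊆ covers := fun _ ⟨𝒬, h𝒬, hk⟩ => ⟨𝒬, h𝒬.1, hk⟩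
  rcases covers.eq_empty_or_nonempty with hempty | hne
  · rw [hempty, subset_empty_iff.1 (hsub.trans hempty.subset)]
  obtain ⟨𝒬, h𝒬, hk⟩ := Nat.sInf_mem hne
  obtain ⟨𝒮, h𝒮, hle⟩ := h𝒬.exists_smallPartition_ncard_le hP
  exact le_antisymm (Nat.sInf_le (hsub (Nat.sInf_mem (s := partitions) ⟨_, 𝒮, h𝒮, rfl⟩)))
    ((Nat.sInf_le (s := partitions) ⟨𝒮, h𝒮, rfl⟩).trans (hk ▸ hle))
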